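/- Let n ≥ 2 and let N be a smooth and symmetric norm on ℝ^n. Let c > 0 be such that the vector v = (c, c, 0, …, 0) satisfies N(v) = 1. If f : ℝ^n → ℝ is a linear functional with f(v) = 1 and f(x) ≤ 1 for every x with N(x) ≤ 1 (i.e., f is a supporting functional of the unit ball at v), then f(x) = (x_1 + x_2)/(2c) for all x ∈ ℝ^n. -/

import Mathlib

/-!
Averaging `y` with its image under the transposition of the first two coordinates, and then
averaging the result with its sign flip off those coordinates, does not increase a symmetric norm
and yields `((y₀ + y₁) / 2) • (1, 1, 0, …, 0)`. Hence `|y₀ + y₁| / (2|c|) ≤ N y`, so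
`x ↦ (x₀ + x₁) / (2c)` supports the unit ball at `v`, and smoothness makes it the only such
functional.
-/

/-- `N` is a norm on `ℝ^n`. -/
def IsNorm {n : ℕ} (N : (Fin n → ℝ) → ℝ) : Prop :=
  (∀ x, N x = 0 ↔ x = 0) ∧
  (∀ (c : ℝ) (x : Fin n → ℝ), N (c • x) = |c| * N x) ∧
  (∀ x y : Fin n → ℝ, N (x + y) ≤ N x + N y)

/-- `N` is permutation-invariant. -/
def PermInvariant {n : ℕ} (N : (Fin n → ℝ) → ℝ) : Prop :=
  ∀ (σ : Equiv.Perm (Fin n)) (x : Fin n → ℝ), N (fun i => x (σ i)) = N x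

/-- `N` is 1-unconditional. -/
def Unconditional {n : ℕ} (N : (Fin n → ℝ) → ℝ) : Prop :=
  ∀ ε : Fin n → ℝ, (∀ i, ε i = 1 ∨ ε i = -1) →
    ∀ x : Fin n → ℝ, N (fun i => ε i * x i) = N x

/-- `N` is smooth: at every point of the unit sphere there is exactly one
supporting functional. -/
def SmoothNorm {n : ℕ} (N : (Fin n → ℝ) → ℝ) : Prop :=
  ∀ x : Fin n → ℝ, N x = 1 →
    ∃! f : (Fin n → ℝ) →ₗ[ℝ] ℝ, f x = 1 ∧ ∀ y : Fin n → ℝ, N y ≤ 1 → f y ≤ 1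

section SymmetricNorm

variable {n : ℕ} {N : (Fin n → ℝ) → ℝ}

def IsSupportingFunctional (N : (Fin n → ℝ) → ℝ) (v : Fin n → ℝ)
    (f : (Fin n → ℝ) →ₗ[ℝ] ℝ) : Prop :=
  f v = 1 ∧ ∀ y, N y ≤ 1 → f y ≤ 1

theorem SmoothNorm.eq_of_isSupportingFunctional (hsmooth : SmoothNorm N) {v : Fin n → ℝ}
    (hv : N v = 1) {f g : (Fin n → ℝ) →ₗ[ℝ] ℝ} (hf : IsSupportingFunctional N v f)
    (hg : IsSupportingFunctional N v g) : f = g :=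
  (hsmooth v hv).unique hf hg

theorem IsNorm.apply_half_smul_add_le (hN : IsNorm N) (x y : Fin n → ℝ) :
    N ((2⁻¹ : ℝ) • (x + y)) ≤ (N x + N y) / 2 := by
  rw [hN.2.1, abs_of_pos (by norm_num)]
  linarith [hN.2.2 x y]

theorem Unconditional.apply_indicator_le (hN : IsNorm N) (huncond : Unconditional N)
    (s : Set (Fin n)) (x : Fin n → ℝ) : N (s.indicator x) ≤ N x := by
  classical
  set ε : Fin n → ℝ := fun i => if i ∈ s then 1 else -1
  have hε : ∀ i, ε i = 1 ∨ ε i = -1 := fun i => by by_cases h : i ∈ s <;> simp [ε, h]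
  have hsplit : s.indicator x = (2⁻¹ : ℝ) • (x + fun i => ε i * x i) := by
    funext i
    by_cases h : i ∈ s
    · simp only [ε, h, Set.indicator_of_mem, ↓reduceIte, Pi.smul_apply, Pi.add_apply,
        smul_eq_mul]
      ring
    · simp [ε, h]
  calc N (s.indicator x) ≤ (N x + N fun i => ε i * x i) / 2 := by
        rw [hsplit]; exact hN.apply_half_smul_add_le _ _
    _ = N x := by rw [huncond ε hε x]; ring

theorem PermInvariant.apply_half_smul_add_perm_le (hN : IsNorm N) (hperm : PermInvariant N)
    (σ : Equiv.Perm (Fin n)) (x : Fin n → ℝ) :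
    N ((2⁻¹ : ℝ) • (x + fun i => x (σ i))) ≤ N x := by
  have := hN.apply_half_smul_add_le x fun i => x (σ i)
  rw [hperm σ x] at this
  linarith

theorem abs_add_div_two_mul_apply_pair_indicator_le (hN : IsNorm N) (hperm : PermInvariant N)
    (huncond : Unconditional N) (a b : Fin n) (x : Fin n → ℝ) :
    |x a + x b| / 2 * N (({a, b} : Set (Fin n)).indicator 1) ≤ N x := by
  set y : Fin n → ℝ := (2⁻¹ : ℝ) • (x + fun i => x (Equiv.swap a b i))
  have hy : ({a, b} : Set (Fin n)).indicator y
      = ((x a + x b) / 2) • ({a, b} : Set (Fin n)).indicator 1 := by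
    funext i
    by_cases hab : i = a ∨ i = b
    · have hi : i ∈ ({a, b} : Set (Fin n)) := hab
      simp only [y, Set.indicator_of_mem hi, Pi.add_apply, Pi.smul_apply, Pi.one_apply, smul_eq_mul]
      rcases hab with rfl | rfl
      · rw [Equiv.swap_apply_left]; ring
      · rw [Equiv.swap_apply_right]; ring
    · simp [hab]
  calc |x a + x b| / 2 * N (({a, b} : Set (Fin n)).indicator 1)
      = N (({a, b} : Set (Fin n)).indicator y) := by
        rw [hy, hN.2.1, abs_div, abs_two]
    _ ≤ N y := huncond.apply_indicator_le hN _ _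
    _ ≤ N x := hperm.apply_half_smul_add_perm_le hN _ x

noncomputable def pairFunctional (a b : Fin n) (c : ℝ) : (Fin n → ℝ) →ₗ[ℝ] ℝ :=
  (2 * c)⁻¹ • ((LinearMap.proj a : (Fin n → ℝ) →ₗ[ℝ] ℝ) + LinearMap.proj b)

theorem pairFunctional_apply (a b : Fin n) (c : ℝ) (y : Fin n → ℝ) :
    pairFunctional a b c y = (y a + y b) / (2 * c) := by
  simp only [pairFunctional, LinearMap.smul_apply, LinearMap.add_apply, LinearMap.coe_proj,
    Function.eval, smul_eq_mul]
  ring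

theorem isSupportingFunctional_pairFunctional (hN : IsNorm N) (hperm : PermInvariant N)
    (huncond : Unconditional N) {a b : Fin n} {c : ℝ}
    (hv : N (c • ({a, b} : Set (Fin n)).indicator 1) = 1) :
    IsSupportingFunctional N (c • ({a, b} : Set (Fin n)).indicator 1) (pairFunctional a b c) := by
  set e : Fin n → ℝ := ({a, b} : Set (Fin n)).indicator 1
  rw [hN.2.1] at hv
  have hc : c ≠ 0 := by rintro rfl; simp at hv
  have hNe : N e = |c|⁻¹ := eq_inv_of_mul_eq_one_right hv
  refine ⟨?_, fun y hy => ?_⟩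
  · have he : e a = 1 ∧ e b = 1 := by simp [e]
    rw [pairFunctional_apply, Pi.smul_apply, Pi.smul_apply, he.1, he.2, smul_eq_mul]
    field_simp
    norm_num
  · rw [pairFunctional_apply]
    calc (y a + y b) / (2 * c) ≤ |(y a + y b) / (2 * c)| := le_abs_self _
      _ = |y a + y b| / 2 * N e := by rw [hNe, abs_div, abs_mul, abs_two]; ring
      _ ≤ N y := abs_add_div_two_mul_apply_pair_indicator_le hN hperm huncond a b y
      _ ≤ 1 := hy

end SymmetricNorm

/-- For a smooth and symmetric norm `N` on `ℝ^n` (`n ≥ 2`), if `v = (c, c, 0, …, 0)` has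
norm one, then the supporting functional of the unit ball at `v` is
`x ↦ (x₁ + x₂)/(2c)`. -/
theorem supporting_functional_of_smooth_symmetric (n : ℕ) (hn : 2 ≤ n)
    (N : (Fin n → ℝ) → ℝ) (hN : IsNorm N) (hperm : PermInvariant N)
    (huncond : Unconditional N) (hsmooth : SmoothNorm N)
    (c : ℝ)
    (hv : N (fun i => if (i : ℕ) < 2 then c else 0) = 1)
    (f : (Fin n → ℝ) →ₗ[ℝ] ℝ)
    (hfv : f (fun i => if (i : ℕ) < 2 then c else 0) = 1)
    (hfsupp : ∀ x : Fin n → ℝ, N x ≤ 1 → f x ≤ 1) :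
    ∀ x : Fin n → ℝ, f x = (x ⟨0, by omega⟩ + x ⟨1, by omega⟩) / (2 * c) := by
  set i₀ : Fin n := ⟨0, by omega⟩
  set i₁ : Fin n := ⟨1, by omega⟩
  have hve : (fun i : Fin n => if (i : ℕ) < 2 then c else 0)
      = c • ({i₀, i₁} : Set (Fin n)).indicator 1 := by
    funext i
    have : (i : ℕ) < 2 ↔ i = i₀ ∨ i = i₁ := by simp only [i₀, i₁, Fin.ext_iff]; omega
    simp [Set.indicator_apply, this]
  rw [hve] at hv hfv
  have hfg := hsmooth.eq_of_isSupportingFunctional hv ⟨hfv, hfsupp⟩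
    (isSupportingFunctional_pairFunctional hN hperm huncond hv)
  intro x
  rw [hfg, pairFunctional_apply]
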